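/- Let L be a system of m linearly independent linear forms in k variables over F_q such that the minimal support size s(L) of a nonzero vector in the row space of L is odd. Then L is not Sidorenko: there exist n and a set A ⊆ F_q^n with |sol(L,A)| < |A|^k / q^{nm}. In fact, for all sufficiently large n, the set A = F_q^n \ {0} witnesses this. -/

import Mathlib

open scoped BigOperators Classical

/-- The number of nonzero coordinates (support size) of a vector. -/
noncomputable def suppCard {F : Type*} [Field F] {k : ℕ} (v : Fin k → F) : ℕ :=
  (Finset.univ.filter fun j => v j ≠ 0).card

/-- `s(L)`: the minimal support size of a nonzero vector in the row space of `L`,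
i.e. the minimal length of an equation induced by `L`. -/
noncomputable def minLen {F : Type*} [Field F] {m k : ℕ} (L : Matrix (Fin m) (Fin k) F) : ℕ :=
  sInf {c | ∃ v ∈ Submodule.span F (Set.range fun i => L i), v ≠ 0 ∧ suppCard v = c}

/-- The rank of the matrix obtained from `L` by deleting the columns indexed by `B`. -/
noncomputable def delRank {F : Type*} [Field F] [Fintype F] {m k : ℕ}
    (L : Matrix (Fin m) (Fin k) F) (B : Finset (Fin k)) : ℕ :=
  (L.submatrix id (fun j : {j : Fin k // j ∉ B} => (j : Fin k))).rank

/-- `B` is good for `L`: writing `|B| = s(L) + t` with `t ≥ 0`, deleting the columns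
indexed by `B` decreases the rank by exactly `t + 1`. -/
noncomputable def Good {F : Type*} [Field F] [Fintype F] {m k : ℕ}
    (L : Matrix (Fin m) (Fin k) F) (B : Finset (Fin k)) : Prop :=
  minLen L ≤ B.card ∧ delRank L B + (B.card - minLen L + 1) = m

/-!
Take `A = F^n \ {0}` and write `Q = q^n`. Inclusion–exclusion over the set `B` of coordinates
forced to vanish gives
`q^{nm} |sol(L, A)| - (Q - 1)^k = ∑_B (-1)^|B| (Q^(|Bᶜ| + D(B)) - Q^|Bᶜ|)`,
where `D(B)` is the dimension of the part of the row space supported in `B`. A Singleton-type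
bound gives `D(B) ≤ |B| - s + 1` whenever `D(B) > 0`, so every exponent is at most `k - s + 1`,
with equality exactly for the good sets (`|B| ≥ s`, `D(B) = |B| - s + 1`). Good sets are closed
under passing to subsets of size `≥ s` and under unions of two members meeting in `≥ s`
elements, so they split into disjoint blocks `{B ⊆ T : |B| ≥ s}` indexed by the maximal good
sets `T`, each contributing `(-1)^s binom(|T| - 1, s - 1)`. For odd `s` the leading coefficient
is therefore `≤ -1`, and the difference is negative as soon as `Q > 2^k`.
-/
open Finset Module

section SetFamilies

variable {α : Type*}

theorem sum_powerset_filter_le_card_neg_one_pow (T : Finset α) {s : ℕ} (hs : 1 ≤ s)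
    (hsT : s ≤ #T) :
    ∑ B ∈ T.powerset with s ≤ #B, (-1 : ℤ) ^ #B = (-1) ^ s * (#T - 1).choose (s - 1) := by
  obtain ⟨r, rfl⟩ : ∃ r, s = r + 1 := ⟨s - 1, by omega⟩
  obtain ⟨N, hN⟩ : ∃ N, #T = N + 1 := ⟨#T - 1, by omega⟩
  have hsmall : ∑ B ∈ T.powerset with ¬ r + 1 ≤ #B, (-1 : ℤ) ^ #B = (-1) ^ r * N.choose r := by
    rw [sum_filter, sum_powerset_apply_card (fun j => if ¬ r + 1 ≤ j then (-1 : ℤ) ^ j else 0),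
      ← Int.alternating_sum_range_choose_eq_choose, hN]
    refine (sum_subset (range_subset_range.2 (by omega)) fun j _ hj => ?_).symm.trans
      (sum_congr rfl fun j hj => ?_)
    · simp_all
    · simp_all [mul_comm]
  have htotal := sum_powerset_neg_one_pow_card_of_nonempty (card_pos.1 (by omega : 0 < #T))
  rw [← sum_filter_add_sum_filter_not _ (fun B => r + 1 ≤ #B), hsmall] at htotal
  rw [hN, Nat.add_sub_cancel, Nat.add_sub_cancel, pow_succ]
  linarith

theorem one_le_neg_one_pow_mul_sum_neg_one_pow_card [DecidableEq α] {s : ℕ} (hs : 1 ≤ s)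
    {G : Finset (Finset α)} (hG : G.Nonempty) (hcard : ∀ U ∈ G, s ≤ #U)
    (hdown : ∀ U ∈ G, ∀ V ⊆ U, s ≤ #V → V ∈ G)
    (hunion : ∀ U ∈ G, ∀ V ∈ G, s ≤ #(U ∩ V) → U ∪ V ∈ G) :
    1 ≤ (-1) ^ s * ∑ U ∈ G, (-1 : ℤ) ^ #U := by
  set tops := {T ∈ G | Maximal (· ∈ G) T}
  have hG_eq : G = tops.biUnion fun T => {U ∈ T.powerset | s ≤ #U} := by
    ext U
    simp only [tops, mem_biUnion, mem_filter, mem_powerset]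
    constructor
    · intro hU
      obtain ⟨T, hUT, hT⟩ := G.exists_le_maximal hU
      exact ⟨T, ⟨hT.prop, hT⟩, hUT, hcard U hU⟩
    · rintro ⟨T, ⟨hTG, -⟩, hUT, hsU⟩
      exact hdown T hTG U hUT hsU
  have hdisj : (tops : Set (Finset α)).PairwiseDisjoint fun T => {U ∈ T.powerset | s ≤ #U} := by
    intro T₁ h₁ T₂ h₂ hne
    simp only [tops, coe_filter, Set.mem_ofPred_eq] at h₁ h₂
    refine disjoint_left.2 fun U hU₁ hU₂ => hne ?_
    simp only [mem_filter, mem_powerset] at hU₁ hU₂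
    have hsub : U ⊆ T₁ ∩ T₂ := subset_inter hU₁.1 hU₂.1
    have hmem := hunion T₁ h₁.1 T₂ h₂.1 (hU₁.2.trans (card_le_card hsub))
    exact (h₁.2.eq_of_le hmem subset_union_left).trans
      (h₂.2.eq_of_le hmem subset_union_right).symm
  have hblock : ∀ T ∈ tops, 1 ≤ (-1) ^ s * ∑ U ∈ T.powerset with s ≤ #U, (-1 : ℤ) ^ #U := by
    intro T hT
    rw [sum_powerset_filter_le_card_neg_one_pow T hs (hcard T (mem_filter.1 hT).1), ← mul_assoc,
      ← pow_add, Even.neg_one_pow ⟨s, rfl⟩, one_mul, Nat.one_le_cast]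
    exact Nat.choose_pos (by have := hcard T (mem_filter.1 hT).1; omega)
  obtain ⟨T, hT⟩ : tops.Nonempty := by
    obtain ⟨U, hU⟩ := hG
    rw [hG_eq] at hU
    obtain ⟨T, hT, -⟩ := mem_biUnion.1 hU
    exact ⟨T, hT⟩
  rw [hG_eq, sum_biUnion hdisj, mul_sum]
  exact (hblock T hT).trans
    (single_le_sum (fun T hT => zero_le_one.trans (hblock T hT)) hT)

end SetFamilies

theorem Submodule.finrank_map_add_finrank_inf_ker {K V V' : Type*} [Field K] [AddCommGroup V]
    [Module K V] [AddCommGroup V'] [Module K V'] [FiniteDimensional K V] (f : V →ₗ[K] V')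
    (X : Submodule K V) :
    finrank K (X.map f) + finrank K ↥(X ⊓ LinearMap.ker f) = finrank K X := by
  have h := LinearMap.finrank_range_add_finrank_ker (f.domRestrict X)
  have hker : (X ⊓ LinearMap.ker f).comap X.subtype = LinearMap.ker (f.domRestrict X) := by
    rw [LinearMap.ker_domRestrict, Submodule.comap_inf, Submodule.comap_subtype_self, top_inf_eq]
  rwa [LinearMap.range_domRestrict, ← hker,
    (Submodule.comapSubtypeEquivOfLe inf_le_left).finrank_eq] at h

section SupportedVectors

variable (F : Type*) {ι : Type*} [Field F]

def supportedIn (B : Finset ι) : Submodule F (ι → F) where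
  carrier := {v | ∀ i ∉ B, v i = 0}
  add_mem' hv hw i hi := by simp [hv i hi, hw i hi]
  zero_mem' _ _ := rfl
  smul_mem' c v hv i hi := by simp [hv i hi]

variable {F}

@[simp]
theorem mem_supportedIn {B : Finset ι} {v : ι → F} : v ∈ supportedIn F B ↔ ∀ i ∉ B, v i = 0 :=
  Iff.rfl

theorem supportedIn_mono {B B' : Finset ι} (h : B ⊆ B') : supportedIn F B ≤ supportedIn F B' :=
  fun _ hv i hi => hv i fun hiB => hi (h hiB)

theorem mem_ker_funLeft_subtype {p : ι → Prop} {v : ι → F} :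
    v ∈ LinearMap.ker (LinearMap.funLeft F F ((↑) : Subtype p → ι)) ↔ ∀ i, p i → v i = 0 := by
  simp [funext_iff, LinearMap.funLeft_apply]

theorem ker_funLeft_compl_eq_supportedIn (B : Finset ι) :
    LinearMap.ker (LinearMap.funLeft F F ((↑) : {i // i ∉ B} → ι)) = supportedIn F B := by
  ext v
  exact mem_ker_funLeft_subtype

variable [Fintype ι]

noncomputable def supportedDim (W : Submodule F (ι → F)) (B : Finset ι) : ℕ :=
  finrank F ↥(W ⊓ supportedIn F B)

variable (W : Submodule F (ι → F))

theorem supportedDim_le_add_card_sdiff [DecidableEq ι] (B C : Finset ι) :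
    supportedDim W B ≤ supportedDim W C + #(B \ C) := by
  set r := LinearMap.funLeft F F ((↑) : {i // i ∈ B \ C} → ι)
  have hker : W ⊓ supportedIn F B ⊓ LinearMap.ker r ≤ W ⊓ supportedIn F C := by
    rintro v ⟨⟨hvW, hvB⟩, hvr⟩
    refine ⟨hvW, fun i hiC => ?_⟩
    by_cases hiB : i ∈ B
    · exact mem_ker_funLeft_subtype.1 hvr i (mem_sdiff.2 ⟨hiB, hiC⟩)
    · exact hvB i hiB
  have hmap : finrank F ((W ⊓ supportedIn F B).map r) ≤ #(B \ C) :=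
    (Submodule.finrank_le _).trans (by rw [finrank_fintype_fun_eq_card, Fintype.card_coe])
  have := Submodule.finrank_map_add_finrank_inf_ker r (W ⊓ supportedIn F B)
  have := Submodule.finrank_mono hker
  unfold supportedDim
  omega

theorem supportedDim_add_supportedDim_le [DecidableEq ι] (B₁ B₂ : Finset ι) :
    supportedDim W B₁ + supportedDim W B₂ ≤
      supportedDim W (B₁ ∪ B₂) + supportedDim W (B₁ ∩ B₂) := by
  set V₁ := W ⊓ supportedIn F B₁
  set V₂ := W ⊓ supportedIn F B₂
  have hsup : V₁ ⊔ V₂ ≤ W ⊓ supportedIn F (B₁ ∪ B₂) :=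
    sup_le (inf_le_inf_left W (supportedIn_mono subset_union_left))
      (inf_le_inf_left W (supportedIn_mono subset_union_right))
  have hinf : V₁ ⊓ V₂ ≤ W ⊓ supportedIn F (B₁ ∩ B₂) := by
    rintro v ⟨⟨hvW, hv₁⟩, ⟨-, hv₂⟩⟩
    refine ⟨hvW, fun i hi => ?_⟩
    by_cases hi₁ : i ∈ B₁
    · exact hv₂ i fun hi₂ => hi (mem_inter.2 ⟨hi₁, hi₂⟩)
    · exact hv₁ i hi₁
  calc supportedDim W B₁ + supportedDim W B₂ = finrank F ↥(V₁ ⊔ V₂) + finrank F ↥(V₁ ⊓ V₂) :=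
        (Submodule.finrank_sup_add_finrank_inf_eq V₁ V₂).symm
    _ ≤ _ := add_le_add (Submodule.finrank_mono hsup) (Submodule.finrank_mono hinf)

variable {W} {s : ℕ} (hs : ∀ v ∈ W, v ≠ 0 → s ≤ #{i | v i ≠ 0})
include hs

theorem le_card_of_supportedDim_pos {B : Finset ι} (hB : 0 < supportedDim W B) :
    s ≤ #B ∧ 0 < #B := by
  obtain ⟨v, ⟨hvW, hvB⟩, hv⟩ := Submodule.exists_mem_ne_zero_of_ne_bot
    (Submodule.one_le_finrank_iff.1 hB)
  have hsupp : ({i | v i ≠ 0} : Finset ι) ⊆ B := fun i hi =>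
    by_contra fun hiB => (mem_filter.1 hi).2 (hvB i hiB)
  obtain ⟨i, hi⟩ := Function.ne_iff.1 hv
  exact ⟨(hs v hvW hv).trans (card_le_card hsupp), card_pos.2 ⟨i, hsupp (by simpa using hi)⟩⟩

theorem supportedDim_add_le_card_add_one [DecidableEq ι] {B : Finset ι}
    (hB : 0 < supportedDim W B) :
    supportedDim W B + s ≤ #B + 1 := by
  have hsB := (le_card_of_supportedDim_pos hs hB).1
  obtain ⟨C, hCB, hC⟩ := exists_subset_card_eq (show s - 1 ≤ #B by omega)
  have hC0 : supportedDim W C = 0 := by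
    by_contra h
    have := le_card_of_supportedDim_pos hs (Nat.pos_of_ne_zero h)
    omega
  have := supportedDim_le_add_card_sdiff W B C
  rw [card_sdiff_of_subset hCB] at this
  omega

theorem sum_neg_one_pow_card_good_le_neg_one [DecidableEq ι] (hodd : Odd s)
    (hv : ∃ v ∈ W, v ≠ 0 ∧ #{i | v i ≠ 0} = s) :
    ∑ B with s ≤ #B ∧ supportedDim W B + s = #B + 1, (-1 : ℤ) ^ #B ≤ -1 := by
  have hdown : ∀ U, s ≤ #U ∧ supportedDim W U + s = #U + 1 → ∀ V ⊆ U, s ≤ #V →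
      s ≤ #V ∧ supportedDim W V + s = #V + 1 := by
    intro U ⟨hsU, hU⟩ V hVU hsV
    have h := supportedDim_le_add_card_sdiff W U V
    rw [card_sdiff_of_subset hVU] at h
    have := card_le_card hVU
    have := supportedDim_add_le_card_add_one hs (B := V) (by omega)
    exact ⟨hsV, by omega⟩
  have hunion : ∀ U₁, s ≤ #U₁ ∧ supportedDim W U₁ + s = #U₁ + 1 →
      ∀ U₂, s ≤ #U₂ ∧ supportedDim W U₂ + s = #U₂ + 1 → s ≤ #(U₁ ∩ U₂) →
      s ≤ #(U₁ ∪ U₂) ∧ supportedDim W (U₁ ∪ U₂) + s = #(U₁ ∪ U₂) + 1 := by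
    intro U₁ h₁ U₂ h₂ hs₁₂
    have hinter := hdown U₁ h₁ _ inter_subset_left hs₁₂
    obtain ⟨hsU₁, h₁⟩ := h₁
    obtain ⟨-, h₂⟩ := h₂
    obtain ⟨-, hinter⟩ := hinter
    have := card_le_card (subset_union_left (s₁ := U₁) (s₂ := U₂))
    have := supportedDim_add_supportedDim_le W U₁ U₂
    have := card_union_add_card_inter U₁ U₂
    have := supportedDim_add_le_card_add_one hs (B := U₁ ∪ U₂) (by omega)
    omega
  obtain ⟨v, hvW, hv0, hvs⟩ := hv
  have hB₀ : 0 < supportedDim W {i | v i ≠ 0} := Submodule.one_le_finrank_iff.2 <|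
    Submodule.ne_bot_iff _ |>.2 ⟨v, ⟨hvW, fun i hi => by simpa using hi⟩, hv0⟩
  have hgood₀ := supportedDim_add_le_card_add_one hs hB₀
  have key := one_le_neg_one_pow_mul_sum_neg_one_pow_card hodd.pos
    (G := {B | s ≤ #B ∧ supportedDim W B + s = #B + 1})
    ⟨({i | v i ≠ 0} : Finset ι), mem_filter.2 ⟨mem_univ _, hvs.ge, by omega⟩⟩
    (fun U hU => (mem_filter.1 hU).2.1)
    (fun U hU V hVU hsV => mem_filter.2 ⟨mem_univ _, hdown U (mem_filter.1 hU).2 V hVU hsV⟩)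
    (fun U₁ h₁ U₂ h₂ hs₁₂ => mem_filter.2
      ⟨mem_univ _, hunion U₁ (mem_filter.1 h₁).2 U₂ (mem_filter.1 h₂).2 hs₁₂⟩)
  rw [hodd.neg_one_pow] at key
  linarith

end SupportedVectors

theorem neg_one_pow_mul_sub_le {X Y M : ℤ} (j : ℕ) (hX : 0 ≤ X) (hXM : X ≤ M) (hY : 0 ≤ Y)
    (hYM : Y ≤ M) : (-1) ^ j * (X - Y) ≤ M := by
  rcases neg_one_pow_eq_or ℤ j with h | h <;> rw [h] <;> linarith

theorem sum_neg_one_pow_mul_pow_sub_pow_neg {ι : Type*} [Fintype ι] [DecidableEq ι]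
    (D : Finset ι → ℕ) {s : ℕ} {Q : ℤ} (hQ : 2 ^ Fintype.card ι < Q)
    (hD : ∀ B, 0 < D B → D B + s ≤ #B + 1)
    (hgood : ∑ B with s ≤ #B ∧ D B + s = #B + 1, (-1 : ℤ) ^ #B ≤ -1) :
    ∑ B : Finset ι, (-1) ^ #B * (Q ^ (#Bᶜ + D B) - Q ^ #Bᶜ) < 0 := by
  obtain ⟨B₀, hB₀⟩ : ({B | s ≤ #B ∧ D B + s = #B + 1} : Finset (Finset ι)).Nonempty := by
    by_contra h
    rw [not_nonempty_iff_eq_empty] at h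
    rw [h, sum_empty] at hgood
    omega
  have hsk : s ≤ Fintype.card ι := (mem_filter.1 hB₀).2.1.trans (card_le_univ _)
  have hQ1 : 1 ≤ Q := le_trans (one_le_pow₀ (by norm_num)) hQ.le
  set M := Q ^ (Fintype.card ι - s)
  have hpow_le : ∀ e ≤ Fintype.card ι - s, 0 ≤ Q ^ e ∧ Q ^ e ≤ M := fun e he =>
    ⟨by positivity, pow_le_pow_right₀ hQ1 he⟩
  have hM : 0 < M := by positivity
  have hterm : ∀ B : Finset ι, (-1) ^ #B * (Q ^ (#Bᶜ + D B) - Q ^ #Bᶜ) ≤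
      (if s ≤ #B ∧ D B + s = #B + 1 then (-1) ^ #B * (Q * M) else 0) + M := by
    intro B
    have hc : #Bᶜ = Fintype.card ι - #B := card_compl B
    have hBk := card_le_univ B
    rcases Nat.eq_zero_or_pos (D B) with h0 | hpos
    · rw [h0, add_zero, sub_self, mul_zero, if_neg (by omega), zero_add]
      exact hM.le
    · have hsD := hD B hpos
      have hcM := hpow_le #Bᶜ (by omega)
      split_ifs with hBgood
      · have htop : Q ^ (#Bᶜ + D B) = Q * M := by
          rw [show #Bᶜ + D B = Fintype.card ι - s + 1 by omega, pow_succ, mul_comm]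
        have := neg_one_pow_mul_sub_le #B le_rfl hM.le hcM.1 hcM.2
        rw [htop]
        linarith
      · have heM := hpow_le (#Bᶜ + D B) (by omega)
        simpa using neg_one_pow_mul_sub_le #B heM.1 heM.2 hcM.1 hcM.2
  calc ∑ B : Finset ι, (-1) ^ #B * (Q ^ (#Bᶜ + D B) - Q ^ #Bᶜ)
      ≤ ∑ B : Finset ι, ((if s ≤ #B ∧ D B + s = #B + 1 then (-1) ^ #B * (Q * M) else 0) + M) :=
        sum_le_sum fun B _ => hterm B
    _ = (∑ B with s ≤ #B ∧ D B + s = #B + 1, (-1 : ℤ) ^ #B) * (Q * M) +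
          2 ^ Fintype.card ι * M := by
        rw [sum_add_distrib, ← sum_filter, sum_mul, sum_const, card_univ, Fintype.card_finset,
          nsmul_eq_mul]
        push_cast
        rfl
    _ < 0 := by
        nlinarith [mul_le_mul_of_nonneg_right hgood (by positivity : (0 : ℤ) ≤ Q * M),
          mul_lt_mul_of_pos_right hQ hM]

theorem card_filter_forall_ne_zero {ι M : Type*} [Fintype ι] [DecidableEq ι] [Fintype M]
    [DecidableEq M] [Zero M] (S : Finset (ι → M)) :
    (#{x ∈ S | ∀ j, x j ≠ 0} : ℤ) =
      ∑ B : Finset ι, (-1 : ℤ) ^ #B * #{x ∈ S | ∀ j ∈ B, x j = 0} := by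
  have h := inclusion_exclusion_sum_inf_compl univ (fun j => ({x | x j = 0} : Finset (ι → M)))
    (fun x => if x ∈ S then (1 : ℤ) else 0)
  simp only [sum_ite_mem, sum_const, nsmul_eq_mul, smul_eq_mul, mul_one, powerset_univ] at h
  have hall : (univ.inf fun j => ({x | x j = 0} : Finset (ι → M))ᶜ) ∩ S =
      {x ∈ S | ∀ j, x j ≠ 0} := by
    ext x; simp [mem_inf, and_comm]
  have hB : ∀ B : Finset ι, (B.inf fun j => ({x | x j = 0} : Finset (ι → M))) ∩ S =
      {x ∈ S | ∀ j ∈ B, x j = 0} := fun B => by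
    ext x; simp [mem_inf, and_comm]
  simpa only [hall, hB] using h

section LinearSystem

open Matrix

variable {F : Type*} [Field F] {m k : ℕ} (L : Matrix (Fin m) (Fin k) F) (B : Finset (Fin k))

theorem mulVec_eq_submatrix_mulVec {v : Fin k → F} (hv : ∀ j ∈ B, v j = 0) :
    L *ᵥ v = L.submatrix id ((↑) : {j // j ∉ B} → Fin k) *ᵥ fun j => v j := by
  ext i
  simp only [Matrix.mulVec, dotProduct, Matrix.submatrix_apply, id]
  rw [← Fintype.sum_subtype_add_sum_subtype (· ∈ B)]
  simp [hv]

variable [Fintype F]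

theorem delRank_add_supportedDim :
    delRank L B + supportedDim (Submodule.span F (Set.range fun i => L i)) B = L.rank := by
  set r := LinearMap.funLeft F F ((↑) : {j // j ∉ B} → Fin k)
  have hrows : Submodule.span F (Set.range (L.submatrix id ((↑) : {j // j ∉ B} → Fin k)).row) =
      (Submodule.span F (Set.range fun i => L i)).map r := by
    rw [← Submodule.span_image, ← Set.range_comp]
    rfl
  rw [delRank, Matrix.rank_eq_finrank_span_row, hrows, Matrix.rank_eq_finrank_span_row,
    supportedDim, ← ker_funLeft_compl_eq_supportedIn]
  exact Submodule.finrank_map_add_finrank_inf_ker r _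

theorem delRank_add_finrank_ker_inf_supportedIn :
    delRank L B + finrank F ↥(LinearMap.ker L.mulVecLin ⊓ supportedIn F Bᶜ) = #Bᶜ := by
  set M := L.submatrix id ((↑) : {j // j ∉ B} → Fin k)
  set r := LinearMap.funLeft F F ((↑) : {j // j ∉ B} → Fin k)
  set K := LinearMap.ker L.mulVecLin ⊓ supportedIn F Bᶜ
  have hvanish : ∀ v ∈ K, ∀ j ∈ B, v j = 0 := fun v hv j hj =>
    (mem_supportedIn.1 hv.2) j (notMem_compl.2 hj)
  have hmap : K.map r = LinearMap.ker M.mulVecLin := by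
    ext y
    constructor
    · rintro ⟨v, hv, rfl⟩
      rw [LinearMap.mem_ker, Matrix.mulVecLin_apply]
      exact (mulVec_eq_submatrix_mulVec L B (hvanish v hv)).symm.trans hv.1
    · intro hy
      set v : Fin k → F := fun j => if h : j ∈ B then 0 else y ⟨j, h⟩
      have hv : ∀ j ∈ B, v j = 0 := fun j hj => dif_pos hj
      have hrv : r v = y := funext fun j => dif_neg j.2
      refine ⟨v, ⟨?_, fun j hj => hv j (not_not.1 (mt mem_compl.2 hj))⟩, hrv⟩
      rw [SetLike.mem_coe, LinearMap.mem_ker, Matrix.mulVecLin_apply,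
        mulVec_eq_submatrix_mulVec L B hv]
      exact (congrArg M.mulVecLin hrv).trans hy
  have hinj : K ⊓ LinearMap.ker r = ⊥ := by
    rw [ker_funLeft_compl_eq_supportedIn, eq_bot_iff]
    rintro v ⟨hv, hvB⟩
    ext j
    by_cases hj : j ∈ B
    · exact hvanish v hv j hj
    · exact hvB j hj
  have hrank := LinearMap.finrank_range_add_finrank_ker M.mulVecLin
  have := Submodule.finrank_map_add_finrank_inf_ker r K
  rw [hmap, hinj, finrank_bot, add_zero] at this
  rw [delRank, Matrix.rank, ← this, hrank, finrank_fintype_fun_eq_card]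
  simp [card_compl]

end LinearSystem

section Counting

open Matrix

variable {F : Type*} [Field F] [Fintype F] {m k : ℕ}
  (L : Matrix (Fin m) (Fin k) F)

noncomputable def solutions (n : ℕ) : Finset (Fin k → Fin n → F) :=
  {x | ∀ i, ∑ j, L i j • x j = 0}

theorem mem_solutions_iff {n : ℕ} {x : Fin k → Fin n → F} :
    x ∈ solutions L n ↔ ∀ c, L *ᵥ (fun j => x j c) = 0 := by
  simp only [solutions, mem_filter, mem_univ, true_and, funext_iff, Matrix.mulVec, dotProduct,
    Finset.sum_apply, Pi.smul_apply, smul_eq_mul, Pi.zero_apply]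
  exact forall_comm

theorem card_solutions_vanishing (n : ℕ) (B : Finset (Fin k)) :
    #{x ∈ solutions L n | ∀ j ∈ B, x j = 0} =
      Fintype.card F ^ (n * finrank F ↥(LinearMap.ker L.mulVecLin ⊓ supportedIn F Bᶜ)) := by
  set K := LinearMap.ker L.mulVecLin ⊓ supportedIn F Bᶜ
  have hmem : ∀ v : Fin k → F, v ∈ K ↔ L *ᵥ v = 0 ∧ ∀ j ∈ B, v j = 0 := fun v => by
    simp [K, Submodule.mem_inf]
  let e : ↥({x ∈ solutions L n | ∀ j ∈ B, x j = 0}) ≃ (Fin n → K) :=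
    { toFun := fun x c => ⟨fun j => x.1 j c, (hmem _).2
        ⟨(mem_solutions_iff L).1 (mem_filter.1 x.2).1 c,
          fun j hj => congrFun ((mem_filter.1 x.2).2 j hj) c⟩⟩
      invFun := fun y => ⟨fun j c => (y c).1 j, mem_filter.2
        ⟨(mem_solutions_iff L).2 fun c => ((hmem _).1 (y c).2).1,
          fun j hj => funext fun c => ((hmem _).1 (y c).2).2 j hj⟩⟩
      left_inv := fun _ => rfl
      right_inv := fun _ => rfl }
  rw [← Fintype.card_coe, Fintype.card_congr e, Fintype.card_fun, Fintype.card_fin,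
    card_eq_pow_finrank (K := F) (V := K), ← pow_mul, mul_comm]

theorem sub_one_pow_card_eq_sum {R ι : Type*} [CommRing R] [Fintype ι] [DecidableEq ι] (Q : R) :
    (Q - 1) ^ Fintype.card ι = ∑ B : Finset ι, (-1) ^ #B * Q ^ #Bᶜ := by
  have h := prod_add (fun _ : ι => (-1 : R)) (fun _ => Q) univ
  simp only [prod_const, card_univ, powerset_univ, ← compl_eq_univ_sdiff] at h
  rw [← h, neg_add_eq_sub]

theorem card_mul_sub_eq_sum (hrank : L.rank = m) (n : ℕ) :
    (Fintype.card F : ℤ) ^ (n * m) * Nat.card {x : Fin k → (Fin n → F) //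
        (∀ j, x j ≠ 0) ∧ ∀ i : Fin m, ∑ j : Fin k, L i j • x j = 0} -
        ((Fintype.card F : ℤ) ^ n - 1) ^ k =
      ∑ B : Finset (Fin k), (-1) ^ #B * (((Fintype.card F : ℤ) ^ n) ^
        (#Bᶜ + supportedDim (Submodule.span F (Set.range fun i => L i)) B) -
          ((Fintype.card F : ℤ) ^ n) ^ #Bᶜ) := by
  have hincl : (Nat.card {x : Fin k → (Fin n → F) //
      (∀ j, x j ≠ 0) ∧ ∀ i : Fin m, ∑ j : Fin k, L i j • x j = 0} : ℤ) =
      ∑ B : Finset (Fin k), (-1 : ℤ) ^ #B * #{x ∈ solutions L n | ∀ j ∈ B, x j = 0} := by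
    have hcard : Nat.card {x : Fin k → (Fin n → F) //
        (∀ j, x j ≠ 0) ∧ ∀ i : Fin m, ∑ j : Fin k, L i j • x j = 0} =
        #{x ∈ solutions L n | ∀ j, x j ≠ 0} := by
      rw [Nat.card_eq_fintype_card, Fintype.card_subtype]
      congr 1
      ext x
      simp [solutions, and_comm]
    rw [hcard]
    -- over `Fin k` the instance deciding `∀ j, x j ≠ 0` is `Nat.decidableForallFin`, not the
    -- generic one in `card_filter_forall_ne_zero`
    convert card_filter_forall_ne_zero (solutions L n)
  have hbinom := sub_one_pow_card_eq_sum (ι := Fin k) ((Fintype.card F : ℤ) ^ n)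
  rw [Fintype.card_fin] at hbinom
  rw [hincl, hbinom, mul_sum, ← sum_sub_distrib]
  refine sum_congr rfl fun B _ => ?_
  have h₁ := delRank_add_supportedDim L B
  have h₂ := delRank_add_finrank_ker_inf_supportedIn L B
  rw [card_solutions_vanishing, show #Bᶜ + supportedDim _ B = m +
    finrank F ↥(LinearMap.ker L.mulVecLin ⊓ supportedIn F Bᶜ) by omega]
  push_cast
  ring

end Counting

/-- Theorem 1.2: if `L` is a system of `m` linearly independent linear forms
in `k` variables over the finite field `F` and the minimal length `s(L)` of an induced
equation is odd, then `L` is not Sidorenko: for all sufficiently large `n`, the set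
`A = F^n \ {0}` (of size `q^n − 1`) has fewer than `|A|^k / q^(nm)` solutions. -/
theorem odd_minimal_length_not_sidorenko
    {F : Type*} [Field F] [Fintype F] {m k : ℕ} (L : Matrix (Fin m) (Fin k) F)
    (hrank : L.rank = m) (hodd : Odd (minLen L)) :
    ∃ N : ℕ, ∀ n ≥ N,
      (Fintype.card F) ^ (n * m) *
          Nat.card {x : Fin k → (Fin n → F) //
            (∀ j, x j ≠ 0) ∧ ∀ i : Fin m, ∑ j : Fin k, L i j • x j = 0}
        < ((Fintype.card F) ^ n - 1) ^ k := by
  set W := Submodule.span F (Set.range fun i => L i)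
  obtain ⟨v, hvW, hv0, hvs⟩ : ∃ v ∈ W, v ≠ 0 ∧ suppCard v = minLen L :=
    Nat.sInf_mem (Nat.nonempty_of_pos_sInf hodd.pos)
  have hs : ∀ v ∈ W, v ≠ 0 → minLen L ≤ #{i | v i ≠ 0} := fun v hvW hv0 =>
    Nat.sInf_le ⟨v, hvW, hv0, rfl⟩
  refine ⟨k + 1, fun n hn => ?_⟩
  have hq : 2 ≤ Fintype.card F := Fintype.one_lt_card
  have hQ : 2 ^ Fintype.card (Fin k) < ((Fintype.card F : ℤ) ^ n) := by
    rw [Fintype.card_fin]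
    calc (2 : ℤ) ^ k < 2 ^ n := pow_lt_pow_right₀ (by norm_num) (by omega)
      _ ≤ _ := pow_le_pow_left₀ (by norm_num) (by exact_mod_cast hq) n
  have hneg := sum_neg_one_pow_mul_pow_sub_pow_neg (supportedDim W) hQ
    (fun B hB => supportedDim_add_le_card_add_one hs hB)
    (sum_neg_one_pow_card_good_le_neg_one hs hodd ⟨v, hvW, hv0, hvs⟩)
  rw [← card_mul_sub_eq_sum L hrank n] at hneg
  have hq1 : 1 ≤ Fintype.card F ^ n := Nat.one_le_pow _ _ (by omega)
  zify [hq1]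
  linarith
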